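/- Let σ be an n×n real orthogonal matrix of finite order acting ℂ-linearly on ℂⁿ, and let U_σ = {x ∈ ℂⁿ : x̄ = σx}. Then U_σ is a real-linear subspace whose real dimension equals the complex dimension of the fixed subspace {x ∈ ℂⁿ : σ²x = x}. In particular, if σ² ≠ id then the n-dimensional Hausdorff measure of U_σ is zero. -/

import Mathlib

open MeasureTheory Matrix
open scoped ENNReal

noncomputable instance (n : ℕ) : MeasurableSpace (EuclideanSpace ℂ (Fin n)) := borel _
instance (n : ℕ) : BorelSpace (EuclideanSpace ℂ (Fin n)) := ⟨rfl⟩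

/-- The ℂ-linear action of a real `n × n` matrix on `ℂⁿ` (with its Euclidean metric). -/
noncomputable def mact {n : ℕ} (σ : Matrix (Fin n) (Fin n) ℝ) (x : EuclideanSpace ℂ (Fin n)) :
    EuclideanSpace ℂ (Fin n) :=
  WithLp.toLp 2 (fun i => ∑ j, (σ i j : ℂ) * x j)

/-- Entrywise complex conjugation on `ℂⁿ`. -/
noncomputable def cconj {n : ℕ} (x : EuclideanSpace ℂ (Fin n)) : EuclideanSpace ℂ (Fin n) :=
  WithLp.toLp 2 (fun i => (starRingEnd ℂ) (x i))



/-!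
Write `U = {x | c x = A x}` for complex conjugation `c` and `A = σ`. As `c` is a conjugate-linear
involution commuting with `A`, every `u ∈ U` satisfies `A² u = A (c u) = c (A u) = u`, and
conversely every `x` with `A² x = x` splits as `2x = (x + A c x) + i (-i (x - A c x))` with both
brackets in `U`. Since `A` is injective the splitting `a + i b` is unique, so the real
dimension of the fixed space of `A²` is `2 dim_ℝ U`, i.e. `dim_ℝ U` equals its complex
dimension. If `σ² ≠ 1` that fixed space is proper, so `U` is a real subspace of dimension `< n`
and is `𝓗ⁿ`-null.
-/

open Complex Module

section TwistedReal

variable {E : Type*} [AddCommGroup E] [Module ℂ E] (c : E →ₗ[ℝ] E) (A : E →ₗ[ℂ] E)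

def twistedReal : Submodule ℝ E :=
  LinearMap.ker (c - A.restrictScalars ℝ)

theorem mem_twistedReal {x : E} : x ∈ twistedReal c A ↔ c x = A x := by
  simp [twistedReal, sub_eq_zero]

def twistedRealAddISMul : twistedReal c A × twistedReal c A →ₗ[ℝ] E :=
  (twistedReal c A).subtype.coprod
    ((I • LinearMap.id : E →ₗ[ℂ] E).restrictScalars ℝ ∘ₗ (twistedReal c A).subtype)

theorem twistedRealAddISMul_apply (p : twistedReal c A × twistedReal c A) :
    twistedRealAddISMul c A p = (p.1 : E) + I • (p.2 : E) :=
  rfl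

variable {c A}

theorem twistedRealAddISMul_injective (hcI : ∀ x, c (I • x) = -(I • c x))
    (hA : Function.Injective A) : Function.Injective (twistedRealAddISMul c A) := by
  rw [← LinearMap.ker_eq_bot, LinearMap.ker_eq_bot']
  rintro ⟨⟨a, ha⟩, ⟨b, hb⟩⟩ hab
  change a + I • b = 0 at hab
  rw [mem_twistedReal] at ha hb
  have hconj : A (a - I • b) = 0 := by
    have := congrArg c hab
    rwa [map_add, hcI, ha, hb, map_zero, ← sub_eq_add_neg, ← map_smul, ← map_sub] at this
  have hsub : a - I • b = 0 := hA (hconj.trans A.map_zero.symm)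
  have ha0 : a = 0 := by
    have h2a : (2 : ℂ) • a = (a + I • b) + (a - I • b) := by rw [two_smul]; abel
    rw [hab, hsub, add_zero] at h2a
    simpa using h2a
  have hb0 : b = 0 := by simpa [ha0] using hab
  simp [ha0, hb0]

theorem range_twistedRealAddISMul (hcI : ∀ x, c (I • x) = -(I • c x))
    (hinv : ∀ x, c (c x) = x) (hcomm : ∀ x, c (A x) = A (c x)) :
    LinearMap.range (twistedRealAddISMul c A) =
      (LinearMap.ker (A * A - 1)).restrictScalars ℝ := by
  have mem_ker : ∀ x, x ∈ LinearMap.ker (A * A - 1) ↔ A (A x) = x := by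
    simp [sub_eq_zero]
  apply le_antisymm
  · rintro _ ⟨⟨⟨a, ha⟩, ⟨b, hb⟩⟩, rfl⟩
    rw [mem_twistedReal] at ha hb
    have fixed : ∀ u, c u = A u → A (A u) = u := fun u hu => by
      rw [← hu, ← hcomm, ← hu, hinv]
    rw [twistedRealAddISMul_apply, Submodule.restrictScalars_mem, mem_ker, map_add, map_add,
      map_smul, map_smul, fixed a ha, fixed b hb]
  · intro x hx
    rw [Submodule.restrictScalars_mem, mem_ker] at hx
    set y := A (c x)
    have hcy : c y = A x := by rw [hcomm, hinv]
    have hAy : A y = c x := by rw [show A y = A (A (c x)) from rfl, ← hcomm, ← hcomm, hx]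
    have hre : x + y ∈ twistedReal c A := by
      rw [mem_twistedReal, map_add, map_add, hcy, hAy, add_comm]
    have him : -I • (x - y) ∈ twistedReal c A := by
      rw [mem_twistedReal, neg_smul, map_neg, map_neg, hcI, neg_neg, map_smul, map_sub, map_sub,
        hcy, hAy, ← smul_neg, neg_sub]
    have htwo : twistedRealAddISMul c A (⟨_, hre⟩, ⟨_, him⟩) = x + x := by
      rw [twistedRealAddISMul_apply, smul_smul, mul_neg, I_mul_I, neg_neg, one_smul,
        add_add_sub_cancel]
    have hx2 : x = (2 : ℝ)⁻¹ • (x + x) := by rw [← two_smul ℝ, smul_smul]; norm_num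
    rw [hx2, ← htwo]
    exact Submodule.smul_mem _ _ (LinearMap.mem_range_self _ _)

theorem finrank_twistedReal [FiniteDimensional ℂ E] (hcI : ∀ x, c (I • x) = -(I • c x))
    (hinv : ∀ x, c (c x) = x) (hcomm : ∀ x, c (A x) = A (c x)) (hA : Function.Injective A) :
    finrank ℝ (twistedReal c A) = finrank ℂ (LinearMap.ker (A * A - 1)) := by
  have : FiniteDimensional ℝ E := Module.Finite.trans ℂ E
  have h := LinearMap.finrank_range_of_inj (twistedRealAddISMul_injective hcI hA)
  rw [range_twistedRealAddISMul hcI hinv hcomm, Module.finrank_prod] at h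
  have hT := finrank_real_of_complex (LinearMap.ker (A * A - 1))
  have hrestrict : finrank ℝ ((LinearMap.ker (A * A - 1)).restrictScalars ℝ) =
      finrank ℝ (LinearMap.ker (A * A - 1)) := rfl
  omega

end TwistedReal

theorem Submodule.hausdorffMeasure_eq_zero_of_finrank_lt {F : Type*} [NormedAddCommGroup F]
    [NormedSpace ℝ F] [MeasurableSpace F] [BorelSpace F] (S : Submodule ℝ F)
    [FiniteDimensional ℝ S] {d : ℝ} (hd : finrank ℝ S < d) : μH[d] (S : Set F) = 0 := by
  have hS : (S : Set F) = ((↑) : S → F) '' Set.univ := by simp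
  rw [hS,
    isometry_subtype_coe.hausdorffMeasure_image (.inl ((Nat.cast_nonneg _).trans hd.le)),
    Real.hausdorffMeasure_of_finrank_lt hd]
  rfl

section EuclideanAction

variable {n : ℕ}

theorem mact_one (x : EuclideanSpace ℂ (Fin n)) : mact 1 x = x := by
  ext i
  simp [mact, Matrix.one_apply, apply_ite]

theorem mact_mul (σ τ : Matrix (Fin n) (Fin n) ℝ) (x : EuclideanSpace ℂ (Fin n)) :
    mact (σ * τ) x = mact σ (mact τ x) := by
  ext i
  simp only [mact, PiLp.toLp_apply, Matrix.mul_apply, ofReal_sum, ofReal_mul, Finset.sum_mul,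
    Finset.mul_sum]
  rw [Finset.sum_comm]
  exact Finset.sum_congr rfl fun l _ => Finset.sum_congr rfl fun j _ => by ring

theorem mact_injective_of_mul_eq_one {σ τ : Matrix (Fin n) (Fin n) ℝ} (h : τ * σ = 1) :
    Function.Injective (mact σ) := fun x y hxy => by
  simpa [← mact_mul, h, mact_one] using congrArg (mact τ) hxy

theorem eq_one_of_forall_mact_eq_self {M : Matrix (Fin n) (Fin n) ℝ}
    (h : ∀ x, mact M x = x) : M = 1 := by
  ext i j
  have hij := congrArg (· i) (h (EuclideanSpace.single j 1))
  simp only [mact, PiLp.toLp_apply, PiLp.single_apply, mul_ite, mul_one, mul_zero,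
    Finset.sum_ite_eq', Finset.mem_univ, if_true] at hij
  rw [Matrix.one_apply]
  split_ifs at hij ⊢ <;> exact_mod_cast hij

theorem cconj_cconj (x : EuclideanSpace ℂ (Fin n)) : cconj (cconj x) = x := by
  ext i
  simp [cconj]

theorem cconj_I_smul (x : EuclideanSpace ℂ (Fin n)) : cconj (I • x) = -(I • cconj x) := by
  ext i
  simp [cconj]

theorem cconj_mact (σ : Matrix (Fin n) (Fin n) ℝ) (x : EuclideanSpace ℂ (Fin n)) :
    cconj (mact σ x) = mact σ (cconj x) := by
  ext i
  simp [cconj, mact, map_sum]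

noncomputable def mactₗ (σ : Matrix (Fin n) (Fin n) ℝ) :
    EuclideanSpace ℂ (Fin n) →ₗ[ℂ] EuclideanSpace ℂ (Fin n) where
  toFun := mact σ
  map_add' x y := by
    ext i
    simp [mact, mul_add, Finset.sum_add_distrib]
  map_smul' c x := by
    ext i
    simp only [mact, PiLp.toLp_apply, PiLp.smul_apply, smul_eq_mul, Finset.mul_sum,
      RingHom.id_apply]
    exact Finset.sum_congr rfl fun j _ => by ring

noncomputable def cconjₗ : EuclideanSpace ℂ (Fin n) →ₗ[ℝ] EuclideanSpace ℂ (Fin n) where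
  toFun := cconj
  map_add' x y := by
    ext i
    simp [cconj]
  map_smul' r x := by
    ext i
    simp [cconj]

end EuclideanAction

theorem stmt2_general (n : ℕ) (σ : Matrix (Fin n) (Fin n) ℝ)
    (horth : σᵀ * σ = 1) :
    (∃ (S : Submodule ℝ (EuclideanSpace ℂ (Fin n)))
        (T : Submodule ℂ (EuclideanSpace ℂ (Fin n))),
        (S : Set (EuclideanSpace ℂ (Fin n))) = {x | cconj x = mact σ x} ∧
        (T : Set (EuclideanSpace ℂ (Fin n))) = {x | mact (σ * σ) x = x} ∧
        Module.finrank ℝ S = Module.finrank ℂ T) ∧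
    (σ * σ ≠ 1 →
      μH[(n : ℝ)] {x : EuclideanSpace ℂ (Fin n) | cconj x = mact σ x} = 0) := by
  set T := LinearMap.ker (mactₗ σ * mactₗ σ - 1)
  have hS : (twistedReal cconjₗ (mactₗ σ) : Set (EuclideanSpace ℂ (Fin n))) =
      {x | cconj x = mact σ x} :=
    Set.ext fun _ => mem_twistedReal _ _
  have hT : (T : Set (EuclideanSpace ℂ (Fin n))) = {x | mact (σ * σ) x = x} := by
    ext x
    simp [T, sub_eq_zero, mactₗ, mact_mul]
  have hdim := finrank_twistedReal (c := cconjₗ) (A := mactₗ σ) cconj_I_smul cconj_cconj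
    (cconj_mact σ) (mact_injective_of_mul_eq_one horth)
  refine ⟨⟨_, T, hS, hT, hdim⟩, fun hσσ => ?_⟩
  have hT_ne_top : T ≠ ⊤ := fun hT_top => hσσ <| eq_one_of_forall_mact_eq_self fun x => by
    have hx : x ∈ (T : Set (EuclideanSpace ℂ (Fin n))) := by simp [hT_top]
    rwa [hT] at hx
  rw [← hS]
  apply Submodule.hausdorffMeasure_eq_zero_of_finrank_lt
  rw [hdim]
  exact_mod_cast (Submodule.finrank_lt hT_ne_top).trans_eq finrank_euclideanSpace_fin

/-- For a real orthogonal matrix `σ` of finite order acting ℂ-linearly on `ℂⁿ`,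
the twisted real subspace `U_σ = {x : x̄ = σx}` is a real-linear subspace whose real dimension
equals the complex dimension of the fixed space `{x : σ²x = x}`; in particular, if `σ² ≠ 1`
then `𝓗ⁿ(U_σ) = 0`. -/
theorem stmt2 (n : ℕ) (σ : Matrix (Fin n) (Fin n) ℝ)
    (horth : σᵀ * σ = 1) (k : ℕ) (hk : 0 < k) (hord : σ ^ k = 1) :
    (∃ (S : Submodule ℝ (EuclideanSpace ℂ (Fin n)))
        (T : Submodule ℂ (EuclideanSpace ℂ (Fin n))),
        (S : Set (EuclideanSpace ℂ (Fin n))) = {x | cconj x = mact σ x} ∧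
        (T : Set (EuclideanSpace ℂ (Fin n))) = {x | mact (σ * σ) x = x} ∧
        Module.finrank ℝ S = Module.finrank ℂ T) ∧
    (σ * σ ≠ 1 →
      μH[(n : ℝ)] {x : EuclideanSpace ℂ (Fin n) | cconj x = mact σ x} = 0) :=
  stmt2_general n σ horth
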